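/- arXiv:2507.08454 — 4 statements merged into one kernel-verified Lean document; each statement's English description precedes it below -/
import Mathlib

section
/- If (θ, θ', χ) satisfies θ ∧ χ ≡ φ ∧ ¬ψ and θ' ∧ χ ≡ ¬φ ∧ ψ (the entailment conditions of the global contrastive explanation problem), then θ is a strong (φ, ψ)-contrast, i.e., φ ∧ ¬ψ ⊨ θ and ¬φ ∧ ψ ⊨ ¬θ. -/
inductive PLF (V : Type) : Type
  | bot  : PLF V
  | var  : V → PLF V
  | neg  : PLF V → PLF V
  | and  : PLF V → PLF V → PLF V
  | or   : PLF V → PLF V → PLF V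

namespace PLF
variable {V : Type}
def eval (s : V → Bool) : PLF V → Bool
  | bot => false
  | var v => s v
  | neg φ => !(eval s φ)
  | and φ ψ => eval s φ && eval s ψ
  | or φ ψ => eval s φ || eval s ψ
end PLF

inductive Lit (V : Type) : Type
  | pos : V → Lit V
  | neg : V → Lit V

namespace Lit
variable {V : Type}
def eval (s : V → Bool) : Lit V → Bool
  | pos v => s v
  | neg v => !(s v)
def compl : Lit V → Lit V
  | pos v => neg v
  | neg v => pos v
def var : Lit V → V
  | pos v => v
  | neg v => v
end Lit

abbrev Clause (V : Type) := List (Lit V)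
abbrev CNF (V : Type) := List (Clause V)

def Clause.ceval {V : Type} (s : V → Bool) (C : Clause V) : Bool := C.any (Lit.eval s)
def CNF.feval {V : Type} (s : V → Bool) (F : CNF V) : Bool := F.all (Clause.ceval s)
def CNF.size {V : Type} (F : CNF V) : Nat := (F.map List.length).sum
def Term.teval {V : Type} (s : V → Bool) (t : List (Lit V)) : Bool := t.all (Lit.eval s)

theorem stmt0 {V : Type} (φ ψ θ θ' χ : PLF V)
    (h1 : ∀ s, (θ.and χ).eval s = (φ.and ψ.neg).eval s)
    (h2 : ∀ s, (θ'.and χ).eval s = (φ.neg.and ψ).eval s) :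
    (∀ s, (φ.and ψ.neg).eval s = true → θ.eval s = true) ∧
    (∀ s, (φ.neg.and ψ).eval s = true → θ.neg.eval s = true) := by
  refine ⟨fun s hs => ?_, fun s hs => ?_⟩
  · have hθχ : (θ.and χ).eval s = true := (h1 s).trans hs
    simp only [PLF.eval, Bool.and_eq_true] at hθχ
    exact hθχ.1
  · have hθ'χ : (θ'.and χ).eval s = true := (h2 s).trans hs
    have hχ : χ.eval s = true := by
      simp only [PLF.eval, Bool.and_eq_true] at hθ'χ
      exact hθ'χ.2
    have hθχ : (θ.and χ).eval s = false := by
      simp only [PLF.eval, Bool.and_eq_true, Bool.not_eq_true'] at hs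
      rw [h1 s]
      simp [PLF.eval, hs.1]
    simpa [PLF.eval, hχ] using hθχ
end

section
/- Let S define a partial assignment (i.e., S is equivalent to a consistent conjunction of literals), and suppose CNF formulas (θ, θ', χ) form an optimal output of the counterfactual difference problem with input (S, φ, ψ): S ≡ θ ∧ χ ⊨ φ ∧ ¬ψ, θ' ∧ χ ⊨ ¬φ ∧ ψ, θ' ∧ χ is satisfiable iff S is satisfiable, with total size minimized. Then θ and θ' are themselves conjunctions of literals (partial assignments). -/
/-!
If a clause `C` of `θ` had two or more literals, it could be shortened without changing the
relevant models. Since `θ ∧ χ` is equivalent to a consistent term `t`, the clause is entailed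
by `t`, so it is either valid (drop it) or contains a literal of `t` (keep only that literal);
either way `θ ∧ χ` keeps its models. For `θ'` only satisfiability of `θ' ∧ χ` matters, so `C`
can be replaced by any of its literals true in a model of `θ' ∧ χ`. Both replacements shrink
the total size, contradicting optimality.
-/

variable {V : Type}

namespace Lit

theorem eval_compl (s : V → Bool) (ℓ : Lit V) : ℓ.compl.eval s = !ℓ.eval s := by
  cases ℓ <;> simp [compl, eval]

theorem eval_congr {s s' : V → Bool} {ℓ : Lit V} (h : s ℓ.var = s' ℓ.var) :
    ℓ.eval s = ℓ.eval s' := by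
  cases ℓ <;> simp_all [var, eval]

theorem eq_or_eq_compl_of_var_eq {ℓ ℓ' : Lit V} (h : ℓ'.var = ℓ.var) :
    ℓ' = ℓ ∨ ℓ' = ℓ.compl := by
  cases ℓ <;> cases ℓ' <;> simp_all [var, compl]

end Lit

theorem Clause.ceval_eq_true_iff (s : V → Bool) (C : Clause V) :
    C.ceval s = true ↔ ∃ ℓ ∈ C, ℓ.eval s = true := by
  simp [Clause.ceval]

theorem Term.teval_eq_true_iff (s : V → Bool) (t : List (Lit V)) :
    Term.teval s t = true ↔ ∀ ℓ ∈ t, ℓ.eval s = true := by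
  simp [Term.teval]

theorem Clause.valid_or_exists_mem_term {t : List (Lit V)} {C : Clause V} {s₀ : V → Bool}
    (hs₀ : Term.teval s₀ t = true) (hC : ∀ s, Term.teval s t = true → C.ceval s = true) :
    (∀ s, C.ceval s = true) ∨ ∃ ℓ ∈ C, ℓ ∈ t := by
  classical
  refine or_iff_not_imp_left.mpr fun hvalid => ?_
  obtain ⟨s₁, hs₁⟩ := not_forall.mp hvalid
  -- agree with the model `s₀` of `t` on the variables of `t`,
  -- and with the countermodel `s₁` of `C` elsewhere
  let s : V → Bool := fun v => if ∃ ℓ ∈ t, ℓ.var = v then s₀ v else s₁ v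
  have hs₀' := (Term.teval_eq_true_iff s₀ t).mp hs₀
  have hst : Term.teval s t = true := (Term.teval_eq_true_iff s t).mpr fun ℓ hℓ => by
    rw [Lit.eval_congr (s' := s₀) (if_pos ⟨ℓ, hℓ, rfl⟩)]
    exact hs₀' ℓ hℓ
  obtain ⟨ℓ, hℓC, hℓs⟩ := (Clause.ceval_eq_true_iff s C).mp (hC s hst)
  by_cases hvar : ∃ ℓ' ∈ t, ℓ'.var = ℓ.var
  · obtain ⟨ℓ', hℓ't, hℓ'var⟩ := hvar
    rcases Lit.eq_or_eq_compl_of_var_eq hℓ'var with rfl | rfl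
    · exact ⟨ℓ', hℓC, hℓ't⟩
    · have := hs₀' _ hℓ't
      rw [Lit.eval_congr (s' := s₀) (if_pos ⟨_, hℓ't, hℓ'var⟩)] at hℓs
      simp [Lit.eval_compl, hℓs] at this
  · rw [Lit.eval_congr (s' := s₁) (if_neg hvar)] at hℓs
    exact absurd ((Clause.ceval_eq_true_iff s₁ C).mpr ⟨ℓ, hℓC, hℓs⟩) hs₁

namespace CNF

theorem feval_eq_true_iff (s : V → Bool) (F : CNF V) :
    F.feval s = true ↔ ∀ C ∈ F, C.ceval s = true := by
  simp [feval]

theorem feval_append (s : V → Bool) (F G : CNF V) :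
    (F ++ G).feval s = (F.feval s && G.feval s) :=
  List.all_append

theorem size_append (F G : CNF V) : (F ++ G).size = F.size + G.size := by
  simp [size]

theorem exists_rest_of_mem {F : CNF V} {C : Clause V} (hC : C ∈ F) :
    ∃ R : CNF V, (∀ s, F.feval s = (C.ceval s && R.feval s)) ∧
      F.size = C.length + R.size := by
  obtain ⟨F₁, F₂, rfl⟩ := List.append_of_mem hC
  refine ⟨F₁ ++ F₂, fun s => ?_, ?_⟩
  · simp only [feval, List.all_append, List.all_cons, Bool.and_left_comm]
  · simp only [size, List.map_append, List.map_cons, List.sum_append, List.sum_cons]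
    omega

theorem exists_eq_singleton_of_length_le_one {F : CNF V} {s : V → Bool} (hs : F.feval s = true)
    (hlen : ∀ C ∈ F, C.length ≤ 1) : ∀ C ∈ F, ∃ ℓ, C = [ℓ] := by
  intro C hC
  refine List.length_eq_one_iff.mp (le_antisymm (hlen C hC) (List.length_pos_iff.mpr ?_))
  rintro rfl
  simpa [Clause.ceval] using (feval_eq_true_iff s F).mp hs [] hC

end CNF

theorem Clause.exists_cnf_size_le_one {t : List (Lit V)} {C : Clause V}
    (ht : ∃ s, Term.teval s t = true) (hC : ∀ s, Term.teval s t = true → C.ceval s = true) :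
    ∃ G : CNF V, G.size ≤ 1 ∧ (∀ s, G.feval s = true → C.ceval s = true) ∧
      ∀ s, Term.teval s t = true → G.feval s = true := by
  obtain ⟨s₀, hs₀⟩ := ht
  rcases Clause.valid_or_exists_mem_term hs₀ hC with hvalid | ⟨ℓ, hℓC, hℓt⟩
  · exact ⟨[], by simp [CNF.size], fun s _ => hvalid s, fun s _ => rfl⟩
  · refine ⟨[[ℓ]], by simp [CNF.size], fun s hs => ?_, fun s hs => ?_⟩
    · refine (Clause.ceval_eq_true_iff s C).mpr ⟨ℓ, hℓC, ?_⟩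
      simpa [CNF.feval, Clause.ceval] using hs
    · simpa [CNF.feval, Clause.ceval] using (Term.teval_eq_true_iff s t).mp hs ℓ hℓt

structure IsCounterfactualDiff (S : Finset (PLF V)) (φ ψ : PLF V) (θ θ' χ : CNF V) : Prop where
  defines : ∀ s, (∀ σ ∈ S, σ.eval s = true) ↔ (θ.feval s && χ.feval s) = true
  entails_left : ∀ s, (θ.feval s && χ.feval s) = true → (φ.and ψ.neg).eval s = true
  entails_right : ∀ s, (θ'.feval s && χ.feval s) = true → (φ.neg.and ψ).eval s = true
  sat_iff : (∃ s, (θ'.feval s && χ.feval s) = true) ↔ ∃ s, ∀ σ ∈ S, σ.eval s = true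

namespace IsCounterfactualDiff

variable {S : Finset (PLF V)} {φ ψ : PLF V} {θ θ' χ : CNF V}

theorem congr_left (h : IsCounterfactualDiff S φ ψ θ θ' χ) {θ₂ : CNF V}
    (hθ : ∀ s, (θ₂.feval s && χ.feval s) = (θ.feval s && χ.feval s)) :
    IsCounterfactualDiff S φ ψ θ₂ θ' χ where
  defines s := by rw [hθ]; exact h.defines s
  entails_left s := by rw [hθ]; exact h.entails_left s
  entails_right := h.entails_right
  sat_iff := h.sat_iff

theorem of_right (h : IsCounterfactualDiff S φ ψ θ θ' χ) {θ'₂ : CNF V}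
    (himp : ∀ s, (θ'₂.feval s && χ.feval s) = true → (θ'.feval s && χ.feval s) = true)
    (hsat : ∃ s, (θ'₂.feval s && χ.feval s) = true) :
    IsCounterfactualDiff S φ ψ θ θ'₂ χ where
  defines := h.defines
  entails_left := h.entails_left
  entails_right s hs := h.entails_right s (himp s hs)
  sat_iff := ⟨fun ⟨s, hs⟩ => h.sat_iff.mp ⟨s, himp s hs⟩, fun _ => hsat⟩

theorem length_le_one_left (h : IsCounterfactualDiff S φ ψ θ θ' χ)
    (hmin : ∀ θ₂ θ'₂ χ₂ : CNF V, IsCounterfactualDiff S φ ψ θ₂ θ'₂ χ₂ →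
      θ.size + θ'.size + χ.size ≤ θ₂.size + θ'₂.size + χ₂.size)
    {t : List (Lit V)} (ht : ∃ s, Term.teval s t = true)
    (hSt : ∀ s, (∀ σ ∈ S, σ.eval s = true) ↔ Term.teval s t = true) :
    ∀ C ∈ θ, C.length ≤ 1 := by
  intro C hC
  by_contra! hlong
  obtain ⟨R, hRfeval, hRsize⟩ := CNF.exists_rest_of_mem hC
  have htθχ s : Term.teval s t = true ↔ (θ.feval s && χ.feval s) = true :=
    (hSt s).symm.trans (h.defines s)
  have htC s (hs : Term.teval s t = true) : C.ceval s = true := by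
    have := (htθχ s).mp hs
    rw [hRfeval, Bool.and_eq_true, Bool.and_eq_true] at this
    exact this.1.1
  obtain ⟨G, hGsize, hGC, htG⟩ := Clause.exists_cnf_size_le_one ht htC
  have hequiv s : ((G ++ R).feval s && χ.feval s) = (θ.feval s && χ.feval s) := by
    have hback := fun hs => htG s ((htθχ s).mpr hs)
    have := hGC s
    rw [hRfeval] at hback
    rw [CNF.feval_append, hRfeval]
    revert hback this
    cases G.feval s <;> cases C.ceval s <;> cases R.feval s <;> cases χ.feval s <;> simp
  have := hmin _ _ _ (h.congr_left hequiv)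
  rw [CNF.size_append] at this
  omega

theorem length_le_one_right (h : IsCounterfactualDiff S φ ψ θ θ' χ)
    (hmin : ∀ θ₂ θ'₂ χ₂ : CNF V, IsCounterfactualDiff S φ ψ θ₂ θ'₂ χ₂ →
      θ.size + θ'.size + χ.size ≤ θ₂.size + θ'₂.size + χ₂.size)
    (hS : ∃ s, ∀ σ ∈ S, σ.eval s = true) :
    ∀ C ∈ θ', C.length ≤ 1 := by
  intro C hC
  by_contra! hlong
  obtain ⟨s₀, hs₀⟩ := h.sat_iff.mpr hS
  obtain ⟨R, hRfeval, hRsize⟩ := CNF.exists_rest_of_mem hC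
  rw [Bool.and_eq_true, hRfeval, Bool.and_eq_true] at hs₀
  obtain ⟨⟨hCs₀, hRs₀⟩, hχs₀⟩ := hs₀
  obtain ⟨ℓ, hℓC, hℓs₀⟩ := (Clause.ceval_eq_true_iff s₀ C).mp hCs₀
  have hℓ s : CNF.feval s [[ℓ]] = ℓ.eval s := by simp [CNF.feval, Clause.ceval]
  have himp s (hs : (CNF.feval s ([[ℓ]] ++ R) && χ.feval s) = true) :
      (θ'.feval s && χ.feval s) = true := by
    rw [CNF.feval_append, hℓ, Bool.and_eq_true, Bool.and_eq_true] at hs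
    rw [hRfeval, (Clause.ceval_eq_true_iff s C).mpr ⟨ℓ, hℓC, hs.1.1⟩, hs.1.2, hs.2]
    rfl
  have hsat : ∃ s, (CNF.feval s ([[ℓ]] ++ R) && χ.feval s) = true :=
    ⟨s₀, by rw [CNF.feval_append, hℓ, hℓs₀, hRs₀, hχs₀]; rfl⟩
  have := hmin _ _ _ (h.of_right himp hsat)
  rw [CNF.size_append] at this
  have : CNF.size [[ℓ]] = 1 := rfl
  omega

end IsCounterfactualDiff

theorem stmt7 {V : Type} (S : Finset (PLF V)) (φ ψ : PLF V) (θ θ' χ : CNF V)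
    (hdef : ∃ t : List (Lit V), (∃ s, Term.teval s t = true) ∧
      ∀ s, (∀ σ ∈ S, σ.eval s = true) ↔ Term.teval s t = true)
    (heqv : ∀ s, (∀ σ ∈ S, σ.eval s = true) ↔ (θ.feval s && χ.feval s) = true)
    (hφ : ∀ s, (θ.feval s && χ.feval s) = true → (φ.and ψ.neg).eval s = true)
    (hψ : ∀ s, (θ'.feval s && χ.feval s) = true → (φ.neg.and ψ).eval s = true)
    (hsat : (∃ s, (θ'.feval s && χ.feval s) = true) ↔ (∃ s, ∀ σ ∈ S, σ.eval s = true))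
    (hmin : ∀ θ₂ θ'₂ χ₂ : CNF V,
      (∀ s, (∀ σ ∈ S, σ.eval s = true) ↔ (θ₂.feval s && χ₂.feval s) = true) →
      (∀ s, (θ₂.feval s && χ₂.feval s) = true → (φ.and ψ.neg).eval s = true) →
      (∀ s, (θ'₂.feval s && χ₂.feval s) = true → (φ.neg.and ψ).eval s = true) →
      ((∃ s, (θ'₂.feval s && χ₂.feval s) = true) ↔ (∃ s, ∀ σ ∈ S, σ.eval s = true)) →
      θ.size + θ'.size + χ.size ≤ θ₂.size + θ'₂.size + χ₂.size) :
    ((∀ C ∈ θ, ∃ ℓ, C = [ℓ]) ∧ (∃ s, θ.feval s = true)) ∧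
    ((∀ C ∈ θ', ∃ ℓ, C = [ℓ]) ∧ (∃ s, θ'.feval s = true)) := by
  obtain ⟨t, ⟨s₀, hs₀⟩, hSt⟩ := hdef
  have h : IsCounterfactualDiff S φ ψ θ θ' χ := ⟨heqv, hφ, hψ, hsat⟩
  have hopt θ₂ θ'₂ χ₂ (h₂ : IsCounterfactualDiff S φ ψ θ₂ θ'₂ χ₂) :=
    hmin θ₂ θ'₂ χ₂ h₂.defines h₂.entails_left h₂.entails_right h₂.sat_iff
  have hS : ∃ s, ∀ σ ∈ S, σ.eval s = true := ⟨s₀, (hSt s₀).mpr hs₀⟩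
  have hθ : θ.feval s₀ = true :=
    ((Bool.and_eq_true _ _).mp ((heqv s₀).mp ((hSt s₀).mpr hs₀))).1
  obtain ⟨s₁, hs₁⟩ := hsat.mpr hS
  have hθ' : θ'.feval s₁ = true := ((Bool.and_eq_true _ _).mp hs₁).1
  have hθunit := CNF.exists_eq_singleton_of_length_le_one hθ
    (h.length_le_one_left hopt ⟨s₀, hs₀⟩ hSt)
  have hθ'unit := CNF.exists_eq_singleton_of_length_le_one hθ' (h.length_le_one_right hopt hS)
  exact ⟨⟨hθunit, s₀, hθ⟩, ⟨hθ'unit, s₁, hθ'⟩⟩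
end

section
/- Let S define a full τ-assignment s, and let (θ, θ', χ) in CNF be an optimal output of the counterfactual difference problem with input (S, φ, ψ): S ≡ θ ∧ χ ⊨ φ ∧ ¬ψ, θ' ∧ χ ⊨ ¬φ ∧ ψ, θ' ∧ χ satisfiable iff S satisfiable, total size size(θ)+size(θ')+size(χ) minimal, and size(χ) maximal as secondary criterion. Then both θ ∧ χ and θ' ∧ χ define full τ-assignments (each has exactly one model over τ). -/
/-!
Since S defines s, the assignment s is the only model of θ ∧ χ. Let t be a model of θ' ∧ χ and v a
variable with t v = s v. Flipping s at v falsifies θ ∧ χ, so some clause of θ or χ contains a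
literal l on v that is true at s, hence also at t. Optimality forces that clause to be the unit
clause [l] of χ: shrinking a longer clause to [l] lowers the total size, and moving a unit clause
[l] from θ to χ keeps the total size but enlarges χ. So every model of θ' ∧ χ agrees with s wherever
one model does; since two Boolean values that both differ from s v are equal, all models of θ' ∧ χ
coincide.
-/

theorem List.one_lt_length_of_mem_of_ne_singleton {α : Type*} {a : α} {l : List α} (ha : a ∈ l)
    (hl : l ≠ [a]) : 1 < l.length := by
  rcases l with _ | ⟨b, _ | ⟨c, l⟩⟩ <;> simp_all

namespace Lit

variable {V : Type}

theorem eval_congr_s9 {l : Lit V} {u w : V → Bool} (h : u l.var = w l.var) : l.eval u = l.eval w := by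
  cases l <;> simp_all [eval, var]

theorem apply_var_eq_of_eval {l : Lit V} {u w : V → Bool} (hu : l.eval u = true)
    (hw : l.eval w = true) : u l.var = w l.var := by
  cases l <;> simp_all [eval, var]

theorem var_eq_of_eval_update_ne [DecidableEq V] {l : Lit V} {s : V → Bool} {v : V} {b : Bool}
    (h : l.eval (Function.update s v b) ≠ l.eval s) : l.var = v := by
  by_contra hv
  exact h (eval_congr_s9 (Function.update_of_ne hv b s))

end Lit

namespace CNF

variable {V : Type} {u w : V → Bool} {F F₁ F₂ : CNF V} {C : Clause V} {l : Lit V}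

@[simp]
theorem feval_cons : CNF.feval u (C :: F) = (C.ceval u && F.feval u) := List.all_cons

@[simp]
theorem feval_append_s9 : CNF.feval u (F₁ ++ F₂) = (F₁.feval u && F₂.feval u) := List.all_append

@[simp]
theorem size_cons : CNF.size (C :: F) = C.length + F.size := by
  simp [CNF.size]

@[simp]
theorem size_append_s9 : CNF.size (F₁ ++ F₂) = F₁.size + F₂.size := by
  simp [CNF.size]

theorem feval_append_and_cons {G : CNF V} :
    ((F₁ ++ F₂).feval u && CNF.feval u (C :: G)) = ((F₁ ++ C :: F₂).feval u && G.feval u) := by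
  simp only [feval_append_s9, feval_cons]
  cases F₁.feval u <;> cases C.ceval u <;> simp

theorem exists_lit_of_feval_true_of_feval_false (hu : F.feval u = true) (hw : F.feval w = false) :
    ∃ C ∈ F, ∃ l ∈ C, l.eval u = true ∧ l.eval w = false := by
  simp only [CNF.feval, List.all_eq_true, List.all_eq_false, Clause.ceval, List.any_eq_true]
    at hu hw
  obtain ⟨C, hC, hCw⟩ := hw
  obtain ⟨l, hl, hlu⟩ := hu C hC
  refine ⟨C, hC, l, hl, hlu, ?_⟩
  by_contra hlw
  exact hCw ⟨l, hl, by simpa using hlw⟩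

theorem feval_unit_of_eval (hl : l ∈ C) (hlu : l.eval u = true) :
    CNF.feval u (F₁ ++ [l] :: F₂) = CNF.feval u (F₁ ++ C :: F₂) := by
  have hC : C.ceval u = true := List.any_eq_true.mpr ⟨l, hl, hlu⟩
  simp only [feval_append_s9, feval_cons, hC]
  simp [Clause.ceval, hlu]

theorem feval_of_feval_unit (hl : l ∈ C) (h : CNF.feval u (F₁ ++ [l] :: F₂) = true) :
    CNF.feval u (F₁ ++ C :: F₂) = true := by
  have hlu : l.eval u = true := by simp_all [Clause.ceval]
  rwa [← feval_unit_of_eval hl hlu]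

end CNF

section CounterfactualDifference

variable {V : Type} (S : Finset (PLF V)) (φ ψ : PLF V)

structure IsCounterfactualDiff_s9 (θ θ' χ : CNF V) : Prop where
  models_iff : ∀ t, (∀ σ ∈ S, σ.eval t = true) ↔ (θ.feval t && χ.feval t) = true
  entails_left : ∀ t, (θ.feval t && χ.feval t) = true → (φ.and ψ.neg).eval t = true
  entails_right : ∀ t, (θ'.feval t && χ.feval t) = true → (φ.neg.and ψ).eval t = true
  sat_iff : (∃ t, (θ'.feval t && χ.feval t) = true) ↔ (∃ t, ∀ σ ∈ S, σ.eval t = true)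

structure IsOptimalCounterfactualDiff (θ θ' χ : CNF V) : Prop
    extends IsCounterfactualDiff_s9 S φ ψ θ θ' χ where
  size_le : ∀ θ₂ θ'₂ χ₂ : CNF V, IsCounterfactualDiff_s9 S φ ψ θ₂ θ'₂ χ₂ →
    θ.size + θ'.size + χ.size ≤ θ₂.size + θ'₂.size + χ₂.size
  size_le_of_size_eq : ∀ θ₂ θ'₂ χ₂ : CNF V, IsCounterfactualDiff_s9 S φ ψ θ₂ θ'₂ χ₂ →
    θ₂.size + θ'₂.size + χ₂.size = θ.size + θ'.size + χ.size → χ₂.size ≤ χ.size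

variable {S φ ψ} {θ θ' χ θ₂ χ₂ : CNF V} {s t u : V → Bool}

theorem IsCounterfactualDiff_s9.of_entails (h : IsCounterfactualDiff_s9 S φ ψ θ θ' χ)
    (hs : ∀ u, (θ.feval u && χ.feval u) = true ↔ u = s)
    (hentails : ∀ u, (θ₂.feval u && χ₂.feval u) = true → (θ.feval u && χ.feval u) = true)
    (hs₂ : (θ₂.feval s && χ₂.feval s) = true) (hχ : ∀ u, χ₂.feval u = true → χ.feval u = true)
    (ht : (θ'.feval t && χ₂.feval t) = true) : IsCounterfactualDiff_s9 S φ ψ θ₂ θ' χ₂ where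
  models_iff u := (h.models_iff u).trans <| (hs u).trans
    ⟨fun hu => hu ▸ hs₂, fun hu => (hs u).mp (hentails u hu)⟩
  entails_left u hu := h.entails_left u (hentails u hu)
  entails_right u hu := by
    simp only [Bool.and_eq_true] at hu
    exact h.entails_right u (by simp [hu.1, hχ u hu.2])
  sat_iff := by
    refine ⟨fun _ => h.sat_iff.mp ⟨t, ?_⟩, fun _ => ⟨t, ht⟩⟩
    simp only [Bool.and_eq_true] at ht ⊢
    exact ⟨ht.1, hχ t ht.2⟩

namespace IsOptimalCounterfactualDiff

variable (h : IsOptimalCounterfactualDiff S φ ψ θ θ' χ)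
  (hs : ∀ u, (θ.feval u && χ.feval u) = true ↔ u = s) (ht : (θ'.feval t && χ.feval t) = true)
include h hs ht

theorem eq_singleton_of_mem_right {C : Clause V} {l : Lit V} (hC : C ∈ χ) (hl : l ∈ C)
    (hls : l.eval s = true) (hlt : l.eval t = true) : C = [l] := by
  by_contra hne
  obtain ⟨χ₁, χ₂, rfl⟩ := List.append_of_mem hC
  have hshrunk : IsCounterfactualDiff_s9 S φ ψ θ θ' (χ₁ ++ [l] :: χ₂) := by
    refine h.of_entails (t := t) hs (fun u hu => ?_) ?_ (fun u => CNF.feval_of_feval_unit hl) ?_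
    · simp only [Bool.and_eq_true] at hu ⊢
      exact ⟨hu.1, CNF.feval_of_feval_unit hl hu.2⟩
    · rw [CNF.feval_unit_of_eval hl hls]
      exact (hs s).mpr rfl
    · rwa [CNF.feval_unit_of_eval hl hlt]
  have hsize := h.size_le _ _ _ hshrunk
  have hlen := List.one_lt_length_of_mem_of_ne_singleton hl hne
  simp only [CNF.size_append_s9, CNF.size_cons, List.length_singleton] at hsize
  omega

theorem not_mem_of_mem_left {C : Clause V} {l : Lit V} (hC : C ∈ θ) (hls : l.eval s = true)
    (hlt : l.eval t = true) : l ∉ C := by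
  intro hl
  obtain ⟨θ₁, θ₂, rfl⟩ := List.append_of_mem hC
  by_cases hunit : C = [l]
  · subst hunit
    have hmoved : IsCounterfactualDiff_s9 S φ ψ (θ₁ ++ θ₂) θ' ([l] :: χ) := by
      refine h.of_entails (t := t) hs (fun u hu => ?_) ?_ (fun u hu => ?_) ?_
      · rwa [CNF.feval_append_and_cons] at hu
      · rw [CNF.feval_append_and_cons]
        exact (hs s).mpr rfl
      · rw [CNF.feval_cons, Bool.and_eq_true] at hu
        exact hu.2
      · simp only [CNF.feval_cons, Bool.and_eq_true] at ht ⊢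
        exact ⟨ht.1, by simpa [Clause.ceval] using hlt, ht.2⟩
    have hsize := h.size_le_of_size_eq _ _ _ hmoved (by
      simp only [CNF.size_append_s9, CNF.size_cons]
      omega)
    simp at hsize
  · have hshrunk : IsCounterfactualDiff_s9 S φ ψ (θ₁ ++ [l] :: θ₂) θ' χ := by
      refine h.of_entails hs (fun u hu => ?_) ?_ (fun _ => id) ht
      · simp only [Bool.and_eq_true] at hu ⊢
        exact ⟨CNF.feval_of_feval_unit hl hu.1, hu.2⟩
      · rw [CNF.feval_unit_of_eval hl hls]
        exact (hs s).mpr rfl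
    have hsize := h.size_le _ _ _ hshrunk
    have hlen := List.one_lt_length_of_mem_of_ne_singleton hl hunit
    simp only [CNF.size_append_s9, CNF.size_cons, List.length_singleton] at hsize
    omega

theorem exists_unit_clause {v : V} (htv : t v = s v) :
    ∃ l : Lit V, [l] ∈ χ ∧ l.var = v ∧ l.eval s = true := by
  classical
  set w := Function.update s v (!s v)
  have hw : (θ.feval w && χ.feval w) = false := by
    rw [Bool.eq_false_iff]
    intro hmodel
    simpa [w] using congrFun ((hs w).mp hmodel) v
  have hs' : (θ.feval s && χ.feval s) = true := (hs s).mpr rfl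
  simp only [Bool.and_eq_true] at hs'
  have hvar {l : Lit V} (hls : l.eval s = true) (hlw : l.eval w = false) : l.var = v :=
    Lit.var_eq_of_eval_update_ne (s := s) (b := !s v) (by
      change l.eval w ≠ _
      rw [hls, hlw]
      simp)
  have hlt {l : Lit V} (hls : l.eval s = true) (hlw : l.eval w = false) : l.eval t = true := by
    rwa [Lit.eval_congr_s9 (by rw [hvar hls hlw, htv])]
  cases hθw : θ.feval w
  · obtain ⟨C, hC, l, hl, hls, hlw⟩ := CNF.exists_lit_of_feval_true_of_feval_false hs'.1 hθw
    exact (h.not_mem_of_mem_left hs ht hC hls (hlt hls hlw) hl).elim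
  · rw [hθw, Bool.true_and] at hw
    obtain ⟨C, hC, l, hl, hls, hlw⟩ := CNF.exists_lit_of_feval_true_of_feval_false hs'.2 hw
    refine ⟨l, ?_, hvar hls hlw, hls⟩
    rwa [← h.eq_singleton_of_mem_right hs ht hC hl hls (hlt hls hlw)]

theorem apply_eq_of_apply_eq (hu : (θ'.feval u && χ.feval u) = true) {v : V} (htv : t v = s v) :
    u v = s v := by
  obtain ⟨l, hl, rfl, hls⟩ := h.exists_unit_clause hs ht htv
  have hlu : l.eval u = true := by
    simp only [Bool.and_eq_true, CNF.feval, List.all_eq_true] at hu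
    simpa [Clause.ceval] using hu.2 [l] hl
  exact Lit.apply_var_eq_of_eval hlu hls

theorem eq_of_models (hu : (θ'.feval u && χ.feval u) = true) : u = t := by
  funext v
  by_cases htv : t v = s v
  · rw [h.apply_eq_of_apply_eq hs ht hu htv, htv]
  · have huv : u v ≠ s v := fun huv => htv (h.apply_eq_of_apply_eq hs hu ht huv)
    rw [Bool.eq_not_of_ne huv, Bool.eq_not_of_ne htv]

end IsOptimalCounterfactualDiff

end CounterfactualDifference

theorem stmt9_general {V : Type} (S : Finset (PLF V)) (φ ψ : PLF V) (s : V → Bool)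
    (θ θ' χ : CNF V)
    (hdef : ∀ t, (∀ σ ∈ S, σ.eval t = true) ↔ t = s)
    (heqv : ∀ t, (∀ σ ∈ S, σ.eval t = true) ↔ (θ.feval t && χ.feval t) = true)
    (hφ : ∀ t, (θ.feval t && χ.feval t) = true → (φ.and ψ.neg).eval t = true)
    (hψ : ∀ t, (θ'.feval t && χ.feval t) = true → (φ.neg.and ψ).eval t = true)
    (hsat : (∃ t, (θ'.feval t && χ.feval t) = true) ↔ (∃ t, ∀ σ ∈ S, σ.eval t = true))
    (hmin : ∀ θ₂ θ'₂ χ₂ : CNF V,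
      (∀ t, (∀ σ ∈ S, σ.eval t = true) ↔ (θ₂.feval t && χ₂.feval t) = true) →
      (∀ t, (θ₂.feval t && χ₂.feval t) = true → (φ.and ψ.neg).eval t = true) →
      (∀ t, (θ'₂.feval t && χ₂.feval t) = true → (φ.neg.and ψ).eval t = true) →
      ((∃ t, (θ'₂.feval t && χ₂.feval t) = true) ↔ (∃ t, ∀ σ ∈ S, σ.eval t = true)) →
      θ.size + θ'.size + χ.size ≤ θ₂.size + θ'₂.size + χ₂.size)
    (hmax : ∀ θ₂ θ'₂ χ₂ : CNF V,
      (∀ t, (∀ σ ∈ S, σ.eval t = true) ↔ (θ₂.feval t && χ₂.feval t) = true) →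
      (∀ t, (θ₂.feval t && χ₂.feval t) = true → (φ.and ψ.neg).eval t = true) →
      (∀ t, (θ'₂.feval t && χ₂.feval t) = true → (φ.neg.and ψ).eval t = true) →
      ((∃ t, (θ'₂.feval t && χ₂.feval t) = true) ↔ (∃ t, ∀ σ ∈ S, σ.eval t = true)) →
      θ₂.size + θ'₂.size + χ₂.size = θ.size + θ'.size + χ.size →
      χ₂.size ≤ χ.size) :
    (∃ s₁ : V → Bool, ∀ t, (θ.feval t && χ.feval t) = true ↔ t = s₁) ∧
    (∃ s₂ : V → Bool, ∀ t, (θ'.feval t && χ.feval t) = true ↔ t = s₂) := by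
  have hopt : IsOptimalCounterfactualDiff S φ ψ θ θ' χ :=
    { models_iff := heqv, entails_left := hφ, entails_right := hψ, sat_iff := hsat
      size_le := fun θ₂ θ'₂ χ₂ h => hmin θ₂ θ'₂ χ₂ h.1 h.2 h.3 h.4
      size_le_of_size_eq := fun θ₂ θ'₂ χ₂ h => hmax θ₂ θ'₂ χ₂ h.1 h.2 h.3 h.4 }
  have hs : ∀ u, (θ.feval u && χ.feval u) = true ↔ u = s := fun u => (heqv u).symm.trans (hdef u)
  obtain ⟨t, ht⟩ := hsat.mpr ⟨s, (hdef s).mpr rfl⟩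
  exact ⟨⟨s, hs⟩, ⟨t, fun u => ⟨fun hu => hopt.eq_of_models hs ht hu, fun hu => hu ▸ ht⟩⟩⟩

theorem stmt9 {V : Type} [Fintype V] (S : Finset (PLF V)) (φ ψ : PLF V) (s : V → Bool)
    (θ θ' χ : CNF V)
    (hdef : ∀ t, (∀ σ ∈ S, σ.eval t = true) ↔ t = s)
    (heqv : ∀ t, (∀ σ ∈ S, σ.eval t = true) ↔ (θ.feval t && χ.feval t) = true)
    (hφ : ∀ t, (θ.feval t && χ.feval t) = true → (φ.and ψ.neg).eval t = true)
    (hψ : ∀ t, (θ'.feval t && χ.feval t) = true → (φ.neg.and ψ).eval t = true)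
    (hsat : (∃ t, (θ'.feval t && χ.feval t) = true) ↔ (∃ t, ∀ σ ∈ S, σ.eval t = true))
    (hmin : ∀ θ₂ θ'₂ χ₂ : CNF V,
      (∀ t, (∀ σ ∈ S, σ.eval t = true) ↔ (θ₂.feval t && χ₂.feval t) = true) →
      (∀ t, (θ₂.feval t && χ₂.feval t) = true → (φ.and ψ.neg).eval t = true) →
      (∀ t, (θ'₂.feval t && χ₂.feval t) = true → (φ.neg.and ψ).eval t = true) →
      ((∃ t, (θ'₂.feval t && χ₂.feval t) = true) ↔ (∃ t, ∀ σ ∈ S, σ.eval t = true)) →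
      θ.size + θ'.size + χ.size ≤ θ₂.size + θ'₂.size + χ₂.size)
    (hmax : ∀ θ₂ θ'₂ χ₂ : CNF V,
      (∀ t, (∀ σ ∈ S, σ.eval t = true) ↔ (θ₂.feval t && χ₂.feval t) = true) →
      (∀ t, (θ₂.feval t && χ₂.feval t) = true → (φ.and ψ.neg).eval t = true) →
      (∀ t, (θ'₂.feval t && χ₂.feval t) = true → (φ.neg.and ψ).eval t = true) →
      ((∃ t, (θ'₂.feval t && χ₂.feval t) = true) ↔ (∃ t, ∀ σ ∈ S, σ.eval t = true)) →
      θ₂.size + θ'₂.size + χ₂.size = θ.size + θ'.size + χ.size →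
      χ₂.size ≤ χ.size) :
    (∃ s₁ : V → Bool, ∀ t, (θ.feval t && χ.feval t) = true ↔ t = s₁) ∧
    (∃ s₂ : V → Bool, ∀ t, (θ'.feval t && χ.feval t) = true ↔ t = s₂) :=
  stmt9_general S φ ψ s θ θ' χ hdef heqv hφ hψ hsat hmin hmax
end

section
/- Let τ = {p₁,...,pₙ, p₁ᵈ,...,pₙᵈ, q₁,...,q_m} and let ξ be a propositional formula over p's and q's. Define φ = (⋀ᵢ (pᵢ ∨ pᵢᵈ)) ∧ ξ[pᵢᵈ replacing ¬pᵢ as fresh variables], ψ = ⋀ᵢ (¬pᵢ ∧ ¬pᵢᵈ), and let s be the assignment making all pᵢ and pᵢᵈ false. Then ψ ⊨ ¬φ, and there exists a set λ of n literals true in s with s △ λ ⊨ φ if and only if the quantified Boolean formula ∃p₁…∃pₙ ∀q₁…∀q_m ξ(p₁,…,pₙ,q₁,…,q_m) is true. -/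
def Pv (n m : ℕ) (i : Fin n) : (Fin n ⊕ Fin n) ⊕ Fin m := Sum.inl (Sum.inl i)
def Pd (n m : ℕ) (i : Fin n) : (Fin n ⊕ Fin n) ⊕ Fin m := Sum.inl (Sum.inr i)
def Qv (n m : ℕ) (j : Fin m) : (Fin n ⊕ Fin n) ⊕ Fin m := Sum.inr j

/-- `⋀ i, (pᵢ ∨ pᵢᵈ)` conjoined with `ξ'`. -/
def phi17 (n m : ℕ) (ξ' : PLF ((Fin n ⊕ Fin n) ⊕ Fin m)) : PLF ((Fin n ⊕ Fin n) ⊕ Fin m) :=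
  PLF.and
    ((List.finRange n).foldr
      (fun i acc => PLF.and (PLF.or (PLF.var (Pv n m i)) (PLF.var (Pd n m i))) acc)
      (PLF.neg PLF.bot))
    ξ'

/-- `⋀ i, (¬pᵢ ∧ ¬pᵢᵈ)`. -/
def psi17 (n m : ℕ) : PLF ((Fin n ⊕ Fin n) ⊕ Fin m) :=
  (List.finRange n).foldr
    (fun i acc => PLF.and (PLF.and (PLF.neg (PLF.var (Pv n m i))) (PLF.neg (PLF.var (Pd n m i)))) acc)
    (PLF.neg PLF.bot)

/-!
`ψ` falsifies the clause `p₀ ∨ p₀ᵈ` of `φ`. A flip set `λ` making `φ` true must flip `pᵢ` or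
`pᵢᵈ` for every `i`; having only `n` elements, it flips exactly one of them, so `s △ λ`
satisfies `pᵢᵈ = ¬pᵢ` and `φ` reduces to `ξ` under the assignment `pᵢ ↦ (pᵢ ∈ λ)`,
whatever the values of the `qⱼ`.
-/

namespace PLF

variable {V α : Type}

theorem eval_foldr_and (s : V → Bool) (f : α → PLF V) (l : List α) :
    (l.foldr (fun i acc => and (f i) acc) (neg bot)).eval s = l.all fun i => (f i).eval s := by
  induction l with
  | nil => rfl
  | cons a l ih => simp only [List.foldr_cons, eval, ih, List.all_cons]

end PLF

section Covering

open Finset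

variable {α : Type} [Fintype α]

/-- The folding map `L → α` is onto, hence injective, since `#L = card α`. -/
theorem inr_mem_iff_inl_notMem_of_card_eq {L : Finset (α ⊕ α)} (hcard : #L = Fintype.card α)
    (hcover : ∀ i, Sum.inl i ∈ L ∨ Sum.inr i ∈ L) (i : α) :
    Sum.inr i ∈ L ↔ Sum.inl i ∉ L := by
  classical
  have himage : L.image (Sum.elim id id) = univ :=
    eq_univ_of_forall fun j => (hcover j).elim (mem_image_of_mem _) (mem_image_of_mem _)
  have hinj : Set.InjOn (Sum.elim id id) (L : Set (α ⊕ α)) :=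
    card_image_iff.mp (by rw [himage, card_univ, hcard])
  exact ⟨fun hr hl => Sum.inl_ne_inr (hinj hl hr rfl), (hcover i).resolve_left⟩

/-- The literals to flip in the all-false assignment so that `pᵢ` takes the value `a i`
and `pᵢᵈ` its negation. -/
def flipSet (a : α → Bool) : Finset (α ⊕ α) :=
  (univ.filter fun i => a i = true).disjSum (univ.filter fun i => a i = false)

@[simp]
theorem inl_mem_flipSet (a : α → Bool) (i : α) : Sum.inl i ∈ flipSet a ↔ a i = true := by
  simp [flipSet]

@[simp]
theorem inr_mem_flipSet (a : α → Bool) (i : α) : Sum.inr i ∈ flipSet a ↔ a i = false := by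
  simp [flipSet]

theorem card_flipSet (a : α → Bool) : #(flipSet a) = Fintype.card α := by
  simp only [flipSet, card_disjSum, ← Bool.not_eq_true]
  exact card_filter_add_card_filter_not _

end Covering

section Reduction

variable {n m : ℕ}

theorem phi17_eval_eq_true_iff (ξ' : PLF ((Fin n ⊕ Fin n) ⊕ Fin m))
    (s : (Fin n ⊕ Fin n) ⊕ Fin m → Bool) :
    (phi17 n m ξ').eval s = true ↔
      (∀ i, s (Pv n m i) = true ∨ s (Pd n m i) = true) ∧ ξ'.eval s = true := by
  simp [phi17, PLF.eval_foldr_and, PLF.eval]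

theorem psi17_eval_eq_true_iff (s : (Fin n ⊕ Fin n) ⊕ Fin m → Bool) :
    (psi17 n m).eval s = true ↔ ∀ i, s (Pv n m i) = false ∧ s (Pd n m i) = false := by
  simp [psi17, PLF.eval_foldr_and, PLF.eval]

theorem phi17_eval_eq_false_of_psi17 (hn : 0 < n) (ξ' : PLF ((Fin n ⊕ Fin n) ⊕ Fin m))
    {s : (Fin n ⊕ Fin n) ⊕ Fin m → Bool} (hs : (psi17 n m).eval s = true) :
    (phi17 n m ξ').eval s = false := by
  rw [← Bool.not_eq_true, phi17_eval_eq_true_iff]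
  rintro ⟨hcover, -⟩
  obtain ⟨hp, hd⟩ := (psi17_eval_eq_true_iff s).mp hs ⟨0, hn⟩
  simpa [hp, hd] using hcover ⟨0, hn⟩

end Reduction

theorem stmt17 (n m : ℕ) (hn : 0 < n)
    (ξ : PLF (Fin n ⊕ Fin m)) (ξ' : PLF ((Fin n ⊕ Fin n) ⊕ Fin m))
    (hξ' : ∀ s : ((Fin n ⊕ Fin n) ⊕ Fin m) → Bool,
      (∀ i, s (Pd n m i) = !(s (Pv n m i))) →
      ξ'.eval s = ξ.eval (fun x => match x with
        | Sum.inl i => s (Pv n m i)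
        | Sum.inr j => s (Qv n m j))) :
    (∀ s, (psi17 n m).eval s = true → (phi17 n m ξ').eval s = false) ∧
    ((∃ L : Finset (Fin n ⊕ Fin n), L.card = n ∧
        ∀ t : ((Fin n ⊕ Fin n) ⊕ Fin m) → Bool,
          (∀ i, t (Pv n m i) = decide (Sum.inl i ∈ L)) →
          (∀ i, t (Pd n m i) = decide (Sum.inr i ∈ L)) →
          (phi17 n m ξ').eval t = true) ↔
      (∃ a : Fin n → Bool, ∀ b : Fin m → Bool,
        ξ.eval (fun x => match x with
          | Sum.inl i => a i
          | Sum.inr j => b j) = true)) := by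
  refine ⟨fun s => phi17_eval_eq_false_of_psi17 hn ξ', ⟨?_, ?_⟩⟩
  · rintro ⟨L, hcard, hL⟩
    have hsat : ∀ b : Fin m → Bool,
        (phi17 n m ξ').eval (Sum.elim (fun x => decide (x ∈ L)) b) = true :=
      fun b => hL _ (fun _ => rfl) (fun _ => rfl)
    have hcover : ∀ i, Sum.inl i ∈ L ∨ Sum.inr i ∈ L := fun i => by
      simpa [Pv, Pd] using ((phi17_eval_eq_true_iff ξ' _).mp (hsat fun _ => false)).1 i
    have hdual := inr_mem_iff_inl_notMem_of_card_eq (hcard.trans (Fintype.card_fin n).symm) hcover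
    refine ⟨fun i => decide (Sum.inl i ∈ L), fun b => ?_⟩
    have hξb := hξ' (Sum.elim (fun x => decide (x ∈ L)) b) fun i => by simp [Pv, Pd, hdual i]
    exact hξb ▸ ((phi17_eval_eq_true_iff ξ' _).mp (hsat b)).2
  · rintro ⟨a, ha⟩
    refine ⟨flipSet a, (card_flipSet a).trans (Fintype.card_fin n), fun t hPv hPd => ?_⟩
    have hp : ∀ i, t (Pv n m i) = a i := fun i => by simp [hPv i]
    have hd : ∀ i, t (Pd n m i) = !a i := fun i => by simp [hPd i]
    refine (phi17_eval_eq_true_iff ξ' t).mpr ⟨fun i => by cases h : a i <;> simp [hp, hd, h], ?_⟩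
    rw [hξ' t fun i => by rw [hp, hd]]
    convert ha fun j => t (Qv n m j) using 2
    ext (i | j)
    exacts [hp i, rfl]
end
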